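/- arXiv:2401.03738 — 4 statements merged into one kernel-verified Lean document; each statement's English description precedes it below -/
import Mathlib

section
/- Let (A_m, f) be the affine quandle on Z_m with f(x) = tx, gcd(t,m)=1, and suppose 1-f is bijective and j(1-t) ≡ 0 mod m only when m | j. Let n be the multiplicative order of t mod m. Then the inner automorphism group Inn(A_m) is isomorphic to the semidirect product Z_m ⋊ Z_n, with presentation ⟨r, s | r^m = 1, s^n = 1, s r s^{-1} = r^t⟩, where r = R_1 R_0^{n-1} and s = R_0. -/
namespace AffQ

variable {m n : ℕ}

/-- multiplication by a unit, as a permutation. -/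
def mulPerm : (ZMod m)ˣ →* Equiv.Perm (ZMod m) := MulAction.toPermHom (ZMod m)ˣ (ZMod m)

lemma mulPerm_apply (u : (ZMod m)ˣ) (x : ZMod m) : mulPerm u x = (u : ZMod m) * x := rfl

lemma mulPerm_injective : Function.Injective (mulPerm (m := m)) := by
  intro u v h
  have h1 : mulPerm u (1 : ZMod m) = mulPerm v 1 := by rw [h]
  simp only [mulPerm_apply, mul_one] at h1
  exact Units.ext h1

/-- translations, as permutations. -/
def trHom : Multiplicative (ZMod m) →* Equiv.Perm (ZMod m) where
  toFun b := Equiv.addLeft b.toAdd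
  map_one' := by ext x; simp
  map_mul' a b := by ext x; simp [add_assoc]

lemma trHom_apply (b : Multiplicative (ZMod m)) (x : ZMod m) : trHom b x = b.toAdd + x := rfl

lemma addLeft_pow (c : ZMod m) (k : ℕ) :
    (Equiv.addLeft c) ^ k = Equiv.addLeft ((k : ZMod m) * c) := by
  induction k with
  | zero => ext x; simp
  | succ k ih =>
      rw [pow_succ, ih]; ext x
      simp [add_mul, add_assoc, add_comm]

lemma addLeft_eq_one_iff (c : ZMod m) : Equiv.addLeft c = 1 ↔ c = 0 := by
  constructor
  · intro h
    have := Equiv.ext_iff.mp h 0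
    simpa using this
  · rintro rfl; ext x; simp

lemma key (u : (ZMod m)ˣ) (b : ZMod m) :
    mulPerm u * Equiv.addLeft b * (mulPerm u)⁻¹ = Equiv.addLeft ((u : ZMod m) * b) := by
  rw [← map_inv]
  ext x
  simp only [Equiv.Perm.mul_apply, mulPerm_apply, Equiv.coe_addLeft]
  rw [mul_add, ← mul_assoc, Units.mul_inv, one_mul]

variable [NeZero n]

/-- `t^a` for `a : ZMod n`, when `orderOf t = n`. -/
def uHom (t : (ZMod m)ˣ) (hn : orderOf t = n) : Multiplicative (ZMod n) →* (ZMod m)ˣ where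
  toFun a := t ^ a.toAdd.val
  map_one' := by simp
  map_mul' a b := by
    simp only [toAdd_mul]
    rw [ZMod.val_add, ← pow_add]
    conv_rhs => rw [← pow_mod_orderOf, hn]

lemma uHom_apply (t : (ZMod m)ˣ) (hn : orderOf t = n) (a : Multiplicative (ZMod n)) :
    uHom t hn a = t ^ a.toAdd.val := rfl

/-- units acting on `Multiplicative (ZMod m)` by multiplication. -/
def unitAut : (ZMod m)ˣ →* MulAut (Multiplicative (ZMod m)) where
  toFun u :=
    { toFun := fun b => Multiplicative.ofAdd ((u : ZMod m) * b.toAdd)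
      invFun := fun b => Multiplicative.ofAdd (((u⁻¹ : (ZMod m)ˣ) : ZMod m) * b.toAdd)
      left_inv := fun b => by
        simp only [toAdd_ofAdd, ← mul_assoc, Units.inv_mul, one_mul, ofAdd_toAdd]
      right_inv := fun b => by
        simp only [toAdd_ofAdd, ← mul_assoc, Units.mul_inv, one_mul, ofAdd_toAdd]
      map_mul' := fun a b => by
        simp only [toAdd_mul, mul_add, ofAdd_add] }
  map_one' := by ext b; simp
  map_mul' u v := by ext b; simp [MulEquiv.coe_mk, mul_assoc]

lemma unitAut_apply (u : (ZMod m)ˣ) (b : Multiplicative (ZMod m)) :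
    (unitAut u b).toAdd = (u : ZMod m) * b.toAdd := rfl

variable (t : (ZMod m)ˣ) (hn : orderOf t = n)

/-- the action used in the semidirect product. -/
def phiAct : Multiplicative (ZMod n) →* MulAut (Multiplicative (ZMod m)) :=
  unitAut.comp (uHom t hn)

lemma compat : ∀ g : Multiplicative (ZMod n),
    trHom.comp ((phiAct t hn g)).toMonoidHom
      = (MulAut.conj ((mulPerm.comp (uHom t hn)) g)).toMonoidHom.comp trHom := by
  intro g
  refine MonoidHom.ext fun b => ?_
  show trHom (phiAct t hn g b)
      = mulPerm (uHom t hn g) * trHom b * (mulPerm (uHom t hn g))⁻¹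
  rw [show trHom b = Equiv.addLeft b.toAdd from rfl, key]
  rfl

/-- the main homomorphism from the semidirect product to permutations. -/
def Phi : SemidirectProduct (Multiplicative (ZMod m)) (Multiplicative (ZMod n)) (phiAct t hn)
    →* Equiv.Perm (ZMod m) :=
  SemidirectProduct.lift trHom (mulPerm.comp (uHom t hn)) (compat t hn)

/-- the underlying type equivalence of a semidirect product with the product. -/
def sdpEquiv {N G : Type*} [Group N] [Group G] (φ : G →* MulAut N) :
    SemidirectProduct N G φ ≃ N × G where
  toFun x := (x.left, x.right)
  invFun p := ⟨p.1, p.2⟩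
  left_inv x := rfl
  right_inv p := rfl

end AffQ

open AffQ

set_option maxHeartbeats 2000000 in
/-- Let `(A_m, f)` be the affine quandle on `Z_m`, `f(x) = t*x` with `t` a unit,
`1 - t` a unit (so that `j(1-t) ≡ 0 mod m` only when `m ∣ j`), and let `n` be the
multiplicative order of `t` mod `m`. Writing `R_j(x) = t*x + (1-t)*j` for the right
translations, the inner automorphism group `Inn(A_m)` (the subgroup of permutations of
`Z_m` generated by the `R_j`) is isomorphic to `Z_m ⋊ Z_n`, having presentation
`⟨r, s | r^m = 1, s^n = 1, s r s⁻¹ = r^t⟩` where `r = R_1 R_0^(n-1)` and `s = R_0`: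
that is, `r` has order `m`, `s` has order `n`, `s r s⁻¹ = r^t`, `r` and `s` generate
`Inn(A_m)`, which has order `m*n` and is isomorphic to a semidirect product
`Z_m ⋊ Z_n`. -/
theorem stmt1 (m n : ℕ) (hm : 0 < m) (t : (ZMod m)ˣ)
    (hconn : IsUnit (1 - (t : ZMod m)))
    (hconn' : ∀ j : ℕ, (j : ZMod m) * (1 - (t : ZMod m)) = 0 → m ∣ j)
    (horder : orderOf t = n)
    (R : ZMod m → Equiv.Perm (ZMod m))
    (hRdef : ∀ j x, R j x = (t : ZMod m) * x + (1 - (t : ZMod m)) * j) :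
    orderOf (R 1 * (R 0) ^ (n - 1)) = m ∧
    orderOf (R 0) = n ∧
    (R 0) * (R 1 * (R 0) ^ (n - 1)) * (R 0)⁻¹
      = (R 1 * (R 0) ^ (n - 1)) ^ (t : ZMod m).val ∧
    Subgroup.closure {R 1 * (R 0) ^ (n - 1), R 0} = Subgroup.closure (Set.range R) ∧
    Nat.card (Subgroup.closure (Set.range R)) = m * n ∧
    ∃ φ : Multiplicative (ZMod n) →* MulAut (Multiplicative (ZMod m)),
      Nonempty ((Subgroup.closure (Set.range R)) ≃*
        SemidirectProduct (Multiplicative (ZMod m)) (Multiplicative (ZMod n)) φ) := by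
  haveI : NeZero m := ⟨hm.ne'⟩
  have hn0 : 0 < n := horder ▸ orderOf_pos t
  haveI : NeZero n := ⟨hn0.ne'⟩
  set c : ZMod m := 1 - (t : ZMod m) with hc
  obtain ⟨cu, hcu⟩ := hconn
  have htn : t ^ n = 1 := horder ▸ pow_orderOf_eq_one t
  -- R 0 is multiplication by t
  have hR0 : R 0 = mulPerm t := by
    ext x; rw [hRdef]; simp [mulPerm_apply]
  -- R 1 * R 0 ^ (n-1) is translation by c
  have hmulPow : ∀ k : ℕ, (mulPerm t) ^ k = mulPerm (t ^ k) := fun k => (map_pow mulPerm t k).symm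
  have hr : R 1 * (R 0) ^ (n - 1) = Equiv.addLeft c := by
    ext x
    rw [hR0, hmulPow, Equiv.Perm.mul_apply, mulPerm_apply, hRdef,
      Units.val_pow_eq_pow_val]
    have h1 : (t : ZMod m) * ((t : ZMod m) ^ (n-1) * x) = ((t : ZMod m) ^ n) * x := by
      rw [← mul_assoc, ← pow_succ']
      congr 2
      omega
    have h2 : ((t : ZMod m) ^ n) = 1 := by
      rw [← Units.val_pow_eq_pow_val, htn, Units.val_one]
    rw [h1, h2, one_mul, mul_one]
    simp [add_comm]
  -- order of r
  have hrpow : ∀ k : ℕ, (Equiv.addLeft c) ^ k = 1 ↔ m ∣ k := by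
    intro k
    rw [addLeft_pow, addLeft_eq_one_iff]
    constructor
    · intro h; exact hconn' k h
    · intro h
      obtain ⟨d, rfl⟩ := h
      push_cast
      simp [ZMod.natCast_self]
  have hordr : orderOf (R 1 * (R 0) ^ (n - 1)) = m := by
    rw [hr]
    refine Nat.dvd_antisymm ?_ ?_
    · exact orderOf_dvd_of_pow_eq_one ((hrpow m).mpr dvd_rfl)
    · exact (hrpow _).mp (pow_orderOf_eq_one _)
  -- order of s
  have hords : orderOf (R 0) = n := by
    rw [hR0, orderOf_injective mulPerm mulPerm_injective t, horder]
  -- conjugation relation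
  have hvalt : (((t : ZMod m).val : ZMod m)) = (t : ZMod m) := by
    simp [ZMod.natCast_val, ZMod.cast_id]
  have hconj : (R 0) * (R 1 * (R 0) ^ (n - 1)) * (R 0)⁻¹
      = (R 1 * (R 0) ^ (n - 1)) ^ (t : ZMod m).val := by
    rw [hr, hR0, key, addLeft_pow, hvalt]
  -- every translation is a power of r
  have haddLeft_pow_mem : ∀ b : ZMod m,
      Equiv.addLeft b = (Equiv.addLeft c) ^ ((((cu⁻¹ : (ZMod m)ˣ) : ZMod m) * b).val) := by
    intro b
    rw [addLeft_pow]
    congr 1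
    rw [ZMod.natCast_val, ZMod.cast_id, ← hcu, mul_comm, ← mul_assoc, Units.mul_inv, one_mul]
  -- closure equality
  have hcl : Subgroup.closure {R 1 * (R 0) ^ (n - 1), R 0} = Subgroup.closure (Set.range R) := by
    apply le_antisymm
    · rw [Subgroup.closure_le]
      rintro x (rfl | rfl)
      · exact mul_mem (Subgroup.subset_closure (Set.mem_range_self 1))
          (pow_mem (Subgroup.subset_closure (Set.mem_range_self 0)) _)
      · exact Subgroup.subset_closure (Set.mem_range_self 0)
    · rw [Subgroup.closure_le]
      rintro x ⟨j, rfl⟩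
      have hRj : R j = Equiv.addLeft (c * j) * mulPerm t := by
        ext x
        rw [hRdef, Equiv.Perm.mul_apply, mulPerm_apply]
        simp [add_comm]
      rw [hRj, haddLeft_pow_mem (c * j), ← hr, ← hR0]
      exact mul_mem
        (pow_mem (Subgroup.subset_closure (Set.mem_insert _ _)) _)
        (Subgroup.subset_closure (Set.mem_insert_of_mem _ rfl))
  -- Phi is injective
  have hPhiinj : Function.Injective (Phi t horder) := by
    rw [injective_iff_map_eq_one]
    intro x hx
    have hx' : trHom x.left * mulPerm (uHom t horder x.right) = 1 := by
      have := congrArg (Phi t horder) (SemidirectProduct.inl_left_mul_inr_right x)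
      rw [map_mul] at this
      rw [← hx, ← this]
      simp [Phi]
    have h0 : (trHom x.left * mulPerm (uHom t horder x.right)) 0 = 0 := by rw [hx']; rfl
    have hb : x.left.toAdd = 0 := by
      simpa [trHom_apply, mulPerm_apply, Equiv.Perm.mul_apply] using h0
    have h1 : (trHom x.left * mulPerm (uHom t horder x.right)) 1 = 1 := by rw [hx']; rfl
    have hu : ((uHom t horder x.right : (ZMod m)ˣ) : ZMod m) = 1 := by
      simpa [trHom_apply, mulPerm_apply, Equiv.Perm.mul_apply, hb] using h1
    have hu' : t ^ x.right.toAdd.val = 1 := Units.ext hu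
    have hdvd : n ∣ x.right.toAdd.val := by
      have := orderOf_dvd_of_pow_eq_one hu'
      rwa [horder] at this
    have hvlt : x.right.toAdd.val < n := ZMod.val_lt _
    have hv0 : x.right.toAdd.val = 0 := Nat.eq_zero_of_dvd_of_lt hdvd hvlt
    have ha : x.right.toAdd = 0 := by
      rwa [ZMod.val_eq_zero] at hv0
    apply SemidirectProduct.ext
    · show x.left = 1
      rw [← ofAdd_toAdd x.left, hb]; rfl
    · show x.right = 1
      rw [← ofAdd_toAdd x.right, ha]; rfl
  -- range of Phi is the closure
  have hsmem : mulPerm t = Phi t horder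
      (SemidirectProduct.inr (φ := phiAct t horder) (Multiplicative.ofAdd 1)) := by
    rw [Phi, SemidirectProduct.lift_inr]
    show mulPerm t = mulPerm (t ^ (Multiplicative.ofAdd (1 : ZMod n)).toAdd.val)
    congr 1
    have : (Multiplicative.ofAdd (1 : ZMod n)).toAdd.val = 1 % n := by
      simp [ZMod.val_one_eq_one_mod]
    rw [this, ← horder, pow_mod_orderOf, pow_one]
  have hrange : (Phi t horder).range = Subgroup.closure {R 1 * (R 0) ^ (n - 1), R 0} := by
    apply le_antisymm
    · rintro x ⟨y, rfl⟩
      have hy : Phi t horder y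
          = trHom y.left * mulPerm (uHom t horder y.right) := by
        have := congrArg (Phi t horder) (SemidirectProduct.inl_left_mul_inr_right y)
        rw [map_mul] at this
        rw [← this]
        simp [Phi]
      rw [hy]
      have h1 : trHom y.left ∈ Subgroup.closure {R 1 * (R 0) ^ (n - 1), R 0} := by
        show Equiv.addLeft y.left.toAdd ∈ _
        rw [haddLeft_pow_mem, ← hr]
        exact pow_mem (Subgroup.subset_closure (Set.mem_insert _ _)) _
      have h2 : mulPerm (uHom t horder y.right)
          ∈ Subgroup.closure {R 1 * (R 0) ^ (n - 1), R 0} := by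
        rw [uHom_apply, ← hmulPow, ← hR0]
        refine pow_mem (Subgroup.subset_closure ?_) _
        exact Set.mem_insert_of_mem _ rfl
      exact mul_mem h1 h2
    · rw [Subgroup.closure_le]
      rintro x (rfl | rfl)
      · have hP : Phi t horder
            (SemidirectProduct.inl (φ := phiAct t horder) (Multiplicative.ofAdd c))
            = R 1 * (R 0) ^ (n - 1) := by
          rw [Phi, SemidirectProduct.lift_inl, hr]; rfl
        exact ⟨_, hP⟩
      · rw [hR0, hsmem]
        exact ⟨_, rfl⟩
  have hrange' : (Phi t horder).range = Subgroup.closure (Set.range R) := by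
    rw [hrange, hcl]
  -- cardinality
  have hcardSDP : Nat.card
      (SemidirectProduct (Multiplicative (ZMod m)) (Multiplicative (ZMod n)) (phiAct t horder))
      = m * n := by
    rw [Nat.card_congr (sdpEquiv _), Nat.card_prod,
      Nat.card_congr (@Multiplicative.toAdd (ZMod m)),
      Nat.card_congr (@Multiplicative.toAdd (ZMod n)), Nat.card_zmod, Nat.card_zmod]
  have hcard : Nat.card (Subgroup.closure (Set.range R)) = m * n := by
    rw [← hrange', ← hcardSDP]
    exact (Nat.card_congr (MonoidHom.ofInjective hPhiinj).toEquiv).symm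
  refine ⟨hordr, hords, hconj, hcl, hcard, phiAct t horder, ⟨?_⟩⟩
  exact (MulEquiv.subgroupCongr hrange'.symm).trans (MonoidHom.ofInjective hPhiinj).symm
end

section
/- Let p be prime and (A_p, f) the affine connected quandle of order p, with n the order of t mod p. Then the permutation representation of Inn(A_p) on C[A_p] decomposes multiplicity-free as the direct sum of the trivial representation and all (p-1)/n distinct n-dimensional irreducible representations of Inn(A_p) ≅ Z_p ⋊ Z_n, each appearing exactly once. -/
/-!
The characters `x ↦ exp (2πi c x / p)` of `ZMod p` form a basis of `C[A_p]`. `Inn(A_p)`, generated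
by the maps `x ↦ t * x + (1 - t) * j`, contains every translation and multiplication by `t`, and
consists of maps `x ↦ t ^ k * x + b`. Such a map sends the character `c` to a multiple of the
character `t ^ k * c`, so the span of the characters indexed by an orbit of `⟨t⟩` on `ZMod p` is
invariant. These orbits are `{0}` and the `(p - 1) / n` cosets of `⟨t⟩` in `(ZMod p)ˣ`, each of
size `n`.

Averaging over translations projects a function onto each of its Fourier components, so an
invariant subspace containing `f` contains every character in the Fourier support of `f`, and then,
by multiplication with powers of `t`, the whole orbit: the pieces are irreducible. An equivariant
map commutes with translations, hence maps each character to a multiple of itself, which cannot lie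
in the span of a disjoint orbit: the pieces are pairwise non-isomorphic.
-/

open Function Submodule

theorem LinearIndependent.iSupIndep_span_image {R M ι κ : Type*} [Ring R] [AddCommGroup M]
    [Module R M] {v : ι → M} (hv : LinearIndependent R v) {s : κ → Set ι}
    (hs : Pairwise (Disjoint on s)) : iSupIndep fun k => span R (v '' s k) := by
  intro k
  rw [← span_iUnion₂, ← Set.image_iUnion₂]
  exact hv.disjoint_span_image (Set.disjoint_iUnion₂_right.2 fun j hj => hs hj.symm)

theorem Module.Basis.iSup_span_image_eq_top {R M ι κ : Type*} [Semiring R] [AddCommMonoid M]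
    [Module R M] (b : Module.Basis ι R M) {s : κ → Set ι} (hs : ⋃ k, s k = Set.univ) :
    ⨆ k, span R (b '' s k) = ⊤ := by
  rw [← span_iUnion, ← Set.image_iUnion, hs, Set.image_univ, b.span_eq]

def affineSubgroup {R : Type*} [CommRing R] (H : Subgroup Rˣ) : Subgroup (Equiv.Perm R) where
  carrier := {σ | ∃ a ∈ H, ∃ b, ∀ x, σ x = a * x + b}
  one_mem' := ⟨1, H.one_mem, 0, fun x => by simp⟩
  mul_mem' := by
    rintro σ τ ⟨a, ha, b, hσ⟩ ⟨a', ha', b', hτ⟩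
    exact ⟨a * a', H.mul_mem ha ha', a * b' + b, fun x => by
      simp only [Equiv.Perm.mul_apply, hσ, hτ, Units.val_mul]
      ring⟩
  inv_mem' := by
    rintro σ ⟨a, ha, b, hσ⟩
    refine ⟨a⁻¹, H.inv_mem ha, -(↑a⁻¹ * b), fun x => σ.injective ?_⟩
    rw [← Equiv.Perm.mul_apply, mul_inv_cancel, Equiv.Perm.one_apply, hσ]
    linear_combination (b - x) * a.mul_inv

namespace ZMod

variable {N : ℕ} [NeZero N]

noncomputable def fourierBasis : Module.Basis (ZMod N) ℂ (ZMod N → ℂ) :=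
  (Pi.basisFun ℂ (ZMod N)).map 𝓕⁻

lemma dft_fourierBasis (c : ZMod N) : 𝓕 (fourierBasis c) = Pi.single c 1 := by
  simp [fourierBasis]

lemma fourierBasis_apply (c x : ZMod N) : fourierBasis c x = (N : ℂ)⁻¹ * stdAddChar (c * x) := by
  simp [fourierBasis, invDFT_apply, Pi.single_apply]

lemma fourierBasis_repr_apply (f : ZMod N → ℂ) (c : ZMod N) : fourierBasis.repr f c = 𝓕 f c := by
  simp [fourierBasis]

lemma fourierBasis_comp {τ : ZMod N → ZMod N} {a b : ZMod N} (hτ : ∀ x, τ x = a * x + b)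
    (c : ZMod N) :
    fourierBasis c ∘ τ = stdAddChar (c * b) • (fourierBasis (a * c) : ZMod N → ℂ) := by
  ext x
  simp only [Function.comp_apply, hτ, fourierBasis_apply, Pi.smul_apply, smul_eq_mul]
  rw [mul_left_comm, ← AddChar.map_add_eq_mul]
  ring_nf

lemma dft_comp_addRight_symm (f : ZMod N → ℂ) (b k : ZMod N) :
    𝓕 (f ∘ (Equiv.addRight b).symm) k = stdAddChar (-(b * k)) * 𝓕 f k := by
  simp only [dft_apply, Finset.mul_sum]
  refine (Fintype.sum_equiv (Equiv.addRight b) _ _ fun j => ?_).symm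
  simp only [Function.comp_apply, Equiv.addRight_symm_apply, Equiv.coe_addRight, smul_eq_mul]
  rw [← mul_assoc, ← AddChar.map_add_eq_mul]
  ring_nf

lemma sum_stdAddChar_mul (c : ZMod N) :
    ∑ b : ZMod N, stdAddChar (b * c) = if c = 0 then (N : ℂ) else 0 := by
  classical
  rw [AddChar.sum_mulShift c (isPrimitive_stdAddChar N), card]
  split_ifs <;> simp

lemma dft_smul_fourierBasis_eq_sum (f : ZMod N → ℂ) (d : ZMod N) :
    𝓕 f d • fourierBasis d
      = (N : ℂ)⁻¹ • ∑ b, stdAddChar (d * b) • (f ∘ (Equiv.addRight b).symm) := by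
  apply dft.injective
  ext k
  have hchar : ∀ b, stdAddChar (d * b) * (stdAddChar (-(b * k)) * 𝓕 f k)
      = stdAddChar (b * (d - k)) * 𝓕 f k := fun b => by
    rw [← mul_assoc, ← AddChar.map_add_eq_mul]
    ring_nf
  simp only [dft_const_smul, map_sum, Pi.smul_apply, Finset.sum_apply, dft_fourierBasis,
    dft_comp_addRight_symm, smul_eq_mul, hchar, ← Finset.sum_mul, sum_stdAddChar_mul, sub_eq_zero]
  rcases eq_or_ne d k with rfl | hdk
  · simp [NeZero.ne]
  · simp [hdk, Ne.symm hdk]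

lemma dft_eq_zero_of_comp_addRight_symm_eq {g : ZMod N → ℂ} {d : ZMod N}
    (hg : ∀ b, g ∘ (Equiv.addRight b).symm = stdAddChar (-(d * b)) • g) {c : ZMod N}
    (hc : c ≠ d) : 𝓕 g c = 0 := by
  have h := congrFun (congrArg 𝓕 (hg 1)) c
  rw [dft_comp_addRight_symm, dft_const_smul, Pi.smul_apply, smul_eq_mul, one_mul, mul_one] at h
  by_contra hne
  exact hc (neg_injective (injective_stdAddChar (mul_right_cancel₀ hne h)))

def fourierSpan (S : Set (ZMod N)) : Submodule ℂ (ZMod N → ℂ) :=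
  span ℂ (fourierBasis '' S)

lemma dft_eq_zero_of_mem_fourierSpan {S : Set (ZMod N)} {f : ZMod N → ℂ}
    (hf : f ∈ fourierSpan S) {d : ZMod N} (hd : d ∉ S) : 𝓕 f d = 0 := by
  rw [← fourierBasis_repr_apply]
  exact Finsupp.notMem_support_iff.1 fun h => hd (fourierBasis.mem_span_image.1 hf h)

lemma finrank_fourierSpan (S : Set (ZMod N)) :
    Module.finrank ℂ (fourierSpan S) = Nat.card S := by
  classical
  rw [fourierSpan, Set.image_eq_range,
    finrank_span_eq_card (b := fun c : S => fourierBasis (c : ZMod N))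
      (fourierBasis.linearIndependent.comp _ Subtype.val_injective),
    Nat.card_eq_fintype_card]

lemma comp_eq_self_of_mem_fourierSpan_zero {f : ZMod N → ℂ} (hf : f ∈ fourierSpan {0})
    (τ : ZMod N → ZMod N) : f ∘ τ = f := by
  rw [fourierSpan, Set.image_singleton] at hf
  obtain ⟨a, rfl⟩ := mem_span_singleton.1 hf
  ext x
  simp [fourierBasis_apply]

lemma comp_symm_mem_fourierSpan {H : Subgroup (ZMod N)ˣ} {S : Set (ZMod N)}
    (hS : ∀ a ∈ H, ∀ c ∈ S, (a : ZMod N) * c ∈ S) {σ : Equiv.Perm (ZMod N)}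
    (hσ : σ ∈ affineSubgroup H) {f : ZMod N → ℂ} (hf : f ∈ fourierSpan S) :
    f ∘ σ.symm ∈ fourierSpan S := by
  obtain ⟨a, ha, b, hab⟩ : σ.symm ∈ affineSubgroup H := inv_mem hσ
  refine (span_le (p := (fourierSpan S).comap (LinearMap.funLeft ℂ ℂ σ.symm))).2 ?_ hf
  rintro _ ⟨c, hc, rfl⟩
  change fourierBasis c ∘ σ.symm ∈ fourierSpan S
  rw [fourierBasis_comp hab]
  exact (fourierSpan S).smul_mem _ (subset_span ⟨_, hS a ha c hc, rfl⟩)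

lemma fourierBasis_mem_of_dft_ne_zero {U : Submodule ℂ (ZMod N → ℂ)}
    (hU : ∀ b, ∀ f ∈ U, f ∘ (Equiv.addRight b).symm ∈ U) {f : ZMod N → ℂ} (hf : f ∈ U)
    {d : ZMod N} (hd : 𝓕 f d ≠ 0) : fourierBasis d ∈ U := by
  refine (U.smul_mem_iff hd).1 ?_
  rw [dft_smul_fourierBasis_eq_sum]
  exact U.smul_mem _ (U.sum_mem fun b _ => U.smul_mem _ (hU b f hf))

theorem eq_bot_or_eq_fourierSpan {G : Subgroup (Equiv.Perm (ZMod N))}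
    {H : Subgroup (ZMod N)ˣ} (hGadd : ∀ b, Equiv.addRight b ∈ G)
    (hGmul : H.map (MulAction.toPermHom (ZMod N)ˣ (ZMod N)) ≤ G) {S : Set (ZMod N)}
    (hS : ∀ c ∈ S, ∀ d ∈ S, ∃ a ∈ H, c = a * d) {U : Submodule ℂ (ZMod N → ℂ)}
    (hUS : U ≤ fourierSpan S) (hU : ∀ σ ∈ G, ∀ f ∈ U, f ∘ σ.symm ∈ U) :
    U = ⊥ ∨ U = fourierSpan S := by
  refine or_iff_not_imp_left.2 fun hne => le_antisymm hUS (span_le.2 ?_)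
  obtain ⟨f, hfU, hf0⟩ := exists_mem_ne_zero_of_ne_bot hne
  obtain ⟨d, hd⟩ : ∃ d, 𝓕 f d ≠ 0 := by
    by_contra! h
    exact hf0 (dft.map_eq_zero_iff.1 (funext h))
  have hdS : d ∈ S := by
    by_contra h
    exact hd (dft_eq_zero_of_mem_fourierSpan (hUS hfU) h)
  have hdU := fourierBasis_mem_of_dft_ne_zero (fun b => hU _ (hGadd b)) hfU hd
  rintro _ ⟨c, hc, rfl⟩
  obtain ⟨a, ha, rfl⟩ := hS c hc d hdS
  have h := hU _ (hGmul ⟨a⁻¹, inv_mem ha, rfl⟩) _ hdU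
  rwa [fourierBasis_comp (a := a) (b := 0) (fun x => by simp [Units.smul_def]), mul_zero,
    AddChar.map_zero_eq_one, one_smul] at h

theorem not_exists_equivariant_of_disjoint {G : Subgroup (Equiv.Perm (ZMod N))}
    (hGadd : ∀ b, Equiv.addRight b ∈ G) {S T : Set (ZMod N)} (hST : Disjoint S T)
    (hS : S.Nonempty) :
    ¬ ∃ e : (ZMod N → ℂ) →ₗ[ℂ] (ZMod N → ℂ),
      map e (fourierSpan S) = fourierSpan T ∧ Set.InjOn e (fourierSpan S) ∧
        ∀ σ ∈ G, ∀ f ∈ fourierSpan S, e (f ∘ σ.symm) = (e f) ∘ σ.symm := by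
  rintro ⟨e, hmap, hinj, hequiv⟩
  obtain ⟨d, hd⟩ := hS
  have hdS : fourierBasis d ∈ fourierSpan S := subset_span ⟨d, hd, rfl⟩
  have hT : e (fourierBasis d) ∈ fourierSpan T := hmap ▸ mem_map_of_mem hdS
  have hzero : e (fourierBasis d) = 0 := by
    refine dft.map_eq_zero_iff.1 (funext fun c => ?_)
    rcases eq_or_ne c d with rfl | hc
    · exact dft_eq_zero_of_mem_fourierSpan hT (hST.notMem_of_mem_left hd)
    · refine dft_eq_zero_of_comp_addRight_symm_eq (fun b => ?_) hc
      rw [← hequiv _ (hGadd b) _ hdS, fourierBasis_comp (a := 1) (b := -b) (fun x => by simp),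
        LinearMap.map_smul, one_mul, mul_neg]
  exact fourierBasis.ne_zero d (hinj hdS (zero_mem _) (hzero.trans (map_zero e).symm))

end ZMod

section UnitOrbit

variable {M : Type*} [CommMonoid M] {H : Subgroup Mˣ}

def unitOrbit (q : Mˣ ⧸ H) : Set M :=
  Units.val '' (QuotientGroup.mk ⁻¹' {q})

lemma mul_mem_unitOrbit {a : Mˣ} (ha : a ∈ H) {q : Mˣ ⧸ H} {c : M} (hc : c ∈ unitOrbit q) :
    ↑a * c ∈ unitOrbit q := by
  obtain ⟨w, rfl, rfl⟩ := hc
  exact ⟨a * w, by simp [QuotientGroup.mk_mul, (QuotientGroup.eq_one_iff a).2 ha], rfl⟩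

lemma exists_eq_mul_of_mem_unitOrbit {q : Mˣ ⧸ H} {c d : M} (hc : c ∈ unitOrbit q)
    (hd : d ∈ unitOrbit q) : ∃ a ∈ H, c = ↑a * d := by
  obtain ⟨w, hw, rfl⟩ := hc
  obtain ⟨v, hv, rfl⟩ := hd
  refine ⟨v⁻¹ * w, QuotientGroup.eq.1 (hv.trans hw.symm), ?_⟩
  rw [← Units.val_mul, mul_comm, mul_inv_cancel_left]

lemma disjoint_unitOrbit {q q' : Mˣ ⧸ H} (h : q ≠ q') :
    Disjoint (unitOrbit q) (unitOrbit q') := by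
  refine Set.disjoint_left.2 ?_
  rintro _ ⟨w, hw, rfl⟩ ⟨v, hv, hvw⟩
  exact h (hw ▸ hv ▸ congrArg _ (Units.ext hvw).symm)

lemma unitOrbit_nonempty (q : Mˣ ⧸ H) : (unitOrbit q).Nonempty := by
  obtain ⟨w, rfl⟩ := QuotientGroup.mk_surjective q
  exact ⟨w, w, rfl, rfl⟩

lemma card_unitOrbit (q : Mˣ ⧸ H) : Nat.card (unitOrbit q) = Nat.card H := by
  rw [unitOrbit, Nat.card_image_of_injective Units.val_injective,
    Nat.card_congr (QuotientGroup.preimageMkEquivSubgroupProdSet H {q}), Nat.card_prod,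
    Nat.card_unique (α := ({q} : Set _)), mul_one]

end UnitOrbit

section MulOrbit

variable {K : Type*} [CommGroupWithZero K] {H : Subgroup Kˣ}

/-- The orbits of `H` acting on `K` by multiplication: `{0}`, and the cosets of `H` in `Kˣ`. -/
def mulOrbit : Option (Kˣ ⧸ H) → Set K
  | none => {0}
  | some q => unitOrbit q

@[simp] lemma mulOrbit_none : mulOrbit (H := H) none = {0} := rfl

@[simp] lemma mulOrbit_some (q : Kˣ ⧸ H) : mulOrbit (some q) = unitOrbit q := rfl

lemma mul_mem_mulOrbit {a : Kˣ} (ha : a ∈ H) {o : Option (Kˣ ⧸ H)} {c : K}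
    (hc : c ∈ mulOrbit o) : ↑a * c ∈ mulOrbit o := by
  cases o with
  | none => simp_all
  | some q => exact mul_mem_unitOrbit ha hc

lemma exists_eq_mul_of_mem_mulOrbit {o : Option (Kˣ ⧸ H)} {c d : K} (hc : c ∈ mulOrbit o)
    (hd : d ∈ mulOrbit o) : ∃ a ∈ H, c = ↑a * d := by
  cases o with
  | none => exact ⟨1, H.one_mem, by simp_all⟩
  | some q => exact exists_eq_mul_of_mem_unitOrbit hc hd

lemma pairwise_disjoint_mulOrbit : Pairwise (Disjoint on (mulOrbit (H := H))) := by
  rintro (_ | q) (_ | q') h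
  · exact absurd rfl h
  · exact Set.disjoint_singleton_left.2 fun ⟨w, _, hw⟩ => w.ne_zero hw
  · exact Set.disjoint_singleton_right.2 fun ⟨w, _, hw⟩ => w.ne_zero hw
  · exact disjoint_unitOrbit fun hq => h (congrArg some hq)

lemma iUnion_mulOrbit : ⋃ o, mulOrbit (H := H) o = Set.univ := by
  refine Set.eq_univ_of_forall fun c => Set.mem_iUnion.2 ?_
  by_cases hc : c = 0
  · exact ⟨none, hc⟩
  · exact ⟨some (Units.mk0 c hc), Units.mk0 c hc, rfl, rfl⟩

lemma mulOrbit_nonempty (o : Option (Kˣ ⧸ H)) : (mulOrbit o).Nonempty := by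
  cases o with
  | none => exact Set.singleton_nonempty 0
  | some q => exact unitOrbit_nonempty q

end MulOrbit

section AffineQuandle

variable {K : Type*} [Field K] {t : K}

/-- The inner automorphism group of the affine quandle `x ◃ j = t * x + (1 - t) * j` on `K`. -/
def affineInn (t : K) : Subgroup (Equiv.Perm K) :=
  Subgroup.closure {σ | ∃ j, ∀ x, σ x = t * x + (1 - t) * j}

lemma affineInn_le_affineSubgroup (ht0 : t ≠ 0) :
    affineInn t ≤ affineSubgroup (Subgroup.zpowers (Units.mk0 t ht0)) :=
  (Subgroup.closure_le _).2 fun _ ⟨j, hj⟩ =>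
    ⟨Units.mk0 t ht0, Subgroup.mem_zpowers _, (1 - t) * j, hj⟩

lemma addRight_mem_affineInn (ht0 : t ≠ 0) (ht1 : t ≠ 1) (b : K) :
    Equiv.addRight b ∈ affineInn t := by
  have hR : ∀ j, (Equiv.mulLeft₀ t ht0).trans (Equiv.addRight ((1 - t) * j)) ∈ affineInn t :=
    fun j => Subgroup.subset_closure ⟨j, fun _ => rfl⟩
  convert mul_mem (hR ((1 - t)⁻¹ * b)) (inv_mem (hR 0)) using 1
  rw [eq_mul_inv_iff_mul_eq]
  ext x
  simp [mul_inv_cancel_left₀ (sub_ne_zero.2 ht1.symm)]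

lemma map_zpowers_le_affineInn (ht0 : t ≠ 0) :
    (Subgroup.zpowers (Units.mk0 t ht0)).map (MulAction.toPermHom Kˣ K) ≤ affineInn t := by
  rw [MonoidHom.map_zpowers, Subgroup.zpowers_le]
  exact Subgroup.subset_closure ⟨0, fun x => by simp [Units.smul_def]⟩

end AffineQuandle

/-- For `p` prime and the affine connected quandle `(A_p, f)` (`f(x) = t*x`,
`t` of order `n` mod `p`), the permutation representation of `Inn(A_p)` (the group of
permutations of `Z_p` generated by the right translations `R_j : x ↦ t*x + (1-t)*j`) on
`C[A_p] = (Z_p → ℂ)` decomposes multiplicity-free as the direct sum of the trivial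
representation and all `(p-1)/n` distinct `n`-dimensional irreducible representations,
each appearing exactly once: there are invariant subspaces `W 0, ..., W ((p-1)/n)`,
independent with supremum everything, `W 0` one-dimensional with trivial action, the
others `n`-dimensional, each irreducible, and pairwise non-isomorphic as representations. -/
theorem stmt13 (p n : ℕ) (hp : p.Prime) (t : ZMod p) (ht0 : t ≠ 0) (ht1 : t ≠ 1)
    (horder : orderOf t = n)
    (Inn : Subgroup (Equiv.Perm (ZMod p)))
    (hInn : Inn = Subgroup.closure
      {σ : Equiv.Perm (ZMod p) | ∃ j : ZMod p, ∀ x, σ x = t * x + (1 - t) * j}) :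
    ∃ W : Fin ((p - 1) / n + 1) → Submodule ℂ (ZMod p → ℂ),
      (∀ i, ∀ σ ∈ Inn, ∀ f ∈ W i, (f ∘ σ.symm) ∈ W i) ∧
      iSup W = ⊤ ∧
      iSupIndep W ∧
      Module.finrank ℂ (W 0) = 1 ∧
      (∀ σ ∈ Inn, ∀ f ∈ W 0, f ∘ σ.symm = f) ∧
      (∀ i, i ≠ 0 → Module.finrank ℂ (W i) = n) ∧
      (∀ i, i ≠ 0 → ∀ U : Submodule ℂ (ZMod p → ℂ), U ≤ W i →
        (∀ σ ∈ Inn, ∀ f ∈ U, (f ∘ σ.symm) ∈ U) → U = ⊥ ∨ U = W i) ∧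
      (∀ i j, i ≠ j →
        ¬ ∃ e : (ZMod p → ℂ) →ₗ[ℂ] (ZMod p → ℂ),
            Submodule.map e (W i) = W j ∧ Set.InjOn e (W i) ∧
            ∀ σ ∈ Inn, ∀ f ∈ W i, e (f ∘ σ.symm) = (e f) ∘ σ.symm) := by
  have := Fact.mk hp
  change Inn = affineInn t at hInn
  subst hInn
  set H := Subgroup.zpowers (Units.mk0 t ht0)
  have hcardH : Nat.card H = n := by
    rw [Nat.card_zpowers, ← orderOf_units, Units.val_mk0, horder]
  have hcard : Nat.card ((ZMod p)ˣ ⧸ H) = (p - 1) / n := by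
    have h := H.card_eq_card_quotient_mul_card_subgroup
    rw [hcardH, Nat.card_eq_fintype_card, ZMod.card_units] at h
    rw [h, Nat.mul_div_cancel _ (hcardH ▸ Nat.card_pos)]
  let e : Fin ((p - 1) / n + 1) ≃ Option ((ZMod p)ˣ ⧸ H) :=
    (finSuccEquiv _).trans (Finite.equivFinOfCardEq hcard).symm.optionCongr
  have he0 : e 0 = none := by simp [e]
  have hdisj := pairwise_disjoint_mulOrbit.comp_of_injective e.injective
  have hadd := addRight_mem_affineInn ht0 ht1
  refine ⟨fun i => ZMod.fourierSpan (mulOrbit (e i)), ?_, ?_, ?_, ?_, ?_, ?_, ?_, ?_⟩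
  · exact fun i σ hσ f hf => ZMod.comp_symm_mem_fourierSpan
      (fun a ha c hc => mul_mem_mulOrbit ha hc) (affineInn_le_affineSubgroup ht0 hσ) hf
  · exact ZMod.fourierBasis.iSup_span_image_eq_top
      ((e.surjective.iUnion_comp _).trans iUnion_mulOrbit)
  · exact ZMod.fourierBasis.linearIndependent.iSupIndep_span_image hdisj
  · simp [ZMod.finrank_fourierSpan, he0]
  · exact fun σ _ f hf => ZMod.comp_eq_self_of_mem_fourierSpan_zero (by simpa [he0] using hf) _
  · intro i hi
    obtain ⟨q, hq⟩ := Option.ne_none_iff_exists'.1 (e.injective.ne hi |>.trans_eq he0)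
    rw [ZMod.finrank_fourierSpan, hq, mulOrbit_some, card_unitOrbit, hcardH]
  · exact fun i _ U => ZMod.eq_bot_or_eq_fourierSpan hadd (map_zpowers_le_affineInn ht0)
      (fun c hc d hd => exists_eq_mul_of_mem_mulOrbit hc hd)
  · exact fun i j hij =>
      ZMod.not_exists_equivariant_of_disjoint hadd (hdisj hij) (mulOrbit_nonempty _)
end

section
/- Let p be prime, (A_p, f) affine connected of order p with n = order of t mod p, and suppose n is even. Then -1 ∈ ⟨t⟩ ≤ Z_p^*, and consequently every diagonal orbit A(k) of Inn(A_p) on A_p × A_p is invariant under the swap map τ(x,y) = (y,x); hence |A_p ⊗ A_p / ⟨τ⟩| = 1 + (p-1)/n. If instead n is odd, then for k ≠ 0 the orbit of (0,k) and the orbit of (k,0) are distinct, and |A_p ⊗ A_p / ⟨τ⟩| = 1 + (p-1)/(2n). -/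
section Aux

variable {p : ℕ}

lemma aux_two_lt (hp : p.Prime) (t : ZMod p) (ht0 : t ≠ 0) (ht1 : t ≠ 1) : 2 < p := by
  haveI := Fact.mk hp
  have h3 : 2 < Fintype.card (ZMod p) := by
    rw [Fintype.two_lt_card_iff]
    exact ⟨0, 1, t, by simp [(Fact.out : p.Prime).one_lt.ne'], fun h => ht0 h.symm,
      fun h => ht1 h.symm⟩
  simpa [ZMod.card] using h3

noncomputable def aff [Fact p.Prime] (u : ZMod p) (hu : u ≠ 0) (c : ZMod p) :
    Equiv.Perm (ZMod p) :=
  (Equiv.mulLeft₀ u hu).trans (Equiv.addRight c)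

@[simp] lemma aff_apply [Fact p.Prime] (u : ZMod p) (hu : u ≠ 0) (c x : ZMod p) :
    aff u hu c x = u * x + c := rfl

end Aux

section Inn

variable [Fact p.Prime] {t : ZMod p}

def genSet (t : ZMod p) : Set (Equiv.Perm (ZMod p)) :=
  {σ | ∃ j : ZMod p, ∀ x, σ x = t * x + (1 - t) * j}

lemma orderOf_t_pos (ht0 : t ≠ 0) : 0 < orderOf t := by
  have h2 : 2 ≤ p := (Fact.out : p.Prime).two_le
  have : IsOfFinOrder t := isOfFinOrder_iff_pow_eq_one.mpr
    ⟨p - 1, by omega, ZMod.pow_card_sub_one_eq_one ht0⟩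
  exact this.orderOf_pos

lemma aff_t_mem (ht0 : t ≠ 0) (ht1 : t ≠ 1) (c : ZMod p) :
    aff t ht0 c ∈ Subgroup.closure (genSet t) := by
  apply Subgroup.subset_closure
  refine ⟨c / (1 - t), fun x => ?_⟩
  have h1t : (1 : ZMod p) - t ≠ 0 := sub_ne_zero_of_ne (Ne.symm ht1)
  rw [aff_apply, mul_div_cancel₀ _ h1t]

lemma aff_pow_mem (ht0 : t ≠ 0) (ht1 : t ≠ 1) (m : ℕ) (c : ZMod p) :
    aff (t ^ m) (pow_ne_zero m ht0) c ∈ Subgroup.closure (genSet t) := by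
  have key : ∀ (m : ℕ) (c : ZMod p),
      aff (t ^ (m + 1)) (pow_ne_zero _ ht0) c ∈ Subgroup.closure (genSet t) := by
    intro m
    induction m with
    | zero =>
      intro c
      have : aff (t ^ 1) (pow_ne_zero _ ht0) c = aff t ht0 c := by
        apply Equiv.ext; intro x; simp
      rw [this]; exact aff_t_mem ht0 ht1 c
    | succ m ih =>
      intro c
      have : aff (t ^ (m + 2)) (pow_ne_zero _ ht0) c
          = aff t ht0 c * aff (t ^ (m + 1)) (pow_ne_zero _ ht0) 0 := by
        apply Equiv.ext; intro x
        simp [Equiv.Perm.mul_apply]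
        ring
      rw [this]
      exact mul_mem (aff_t_mem ht0 ht1 c) (ih 0)
  have hn : orderOf t ≠ 0 := (orderOf_t_pos ht0).ne'
  have heq : aff (t ^ m) (pow_ne_zero m ht0) c
      = aff (t ^ (m + orderOf t)) (pow_ne_zero _ ht0) c := by
    apply Equiv.ext; intro x
    simp [pow_add, pow_orderOf_eq_one]
  rw [heq]
  obtain ⟨k, hk⟩ : ∃ k, m + orderOf t = k + 1 := ⟨m + orderOf t - 1, by omega⟩
  rw [show (aff (t ^ (m + orderOf t)) (pow_ne_zero _ ht0) c : Equiv.Perm (ZMod p))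
      = aff (t ^ (k+1)) (pow_ne_zero _ ht0) c by congr 1 <;> rw [hk]]
  exact key k c

lemma affine_of_mem (ht0 : t ≠ 0) (g : Equiv.Perm (ZMod p))
    (hg : g ∈ Subgroup.closure (genSet t)) :
    ∃ (m : ℕ) (c : ZMod p), ∀ x, g x = t ^ m * x + c := by
  induction hg using Subgroup.closure_induction with
  | mem σ hσ =>
    obtain ⟨j, hj⟩ := hσ
    exact ⟨1, (1 - t) * j, fun x => by rw [hj, pow_one]⟩
  | one => exact ⟨0, 0, fun x => by simp⟩
  | mul g h _ _ hg hh =>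
    obtain ⟨m, c, hgc⟩ := hg
    obtain ⟨m', c', hhc⟩ := hh
    refine ⟨m + m', t ^ m * c' + c, fun x => ?_⟩
    rw [Equiv.Perm.mul_apply, hgc, hhc, pow_add]; ring
  | inv g _ hg =>
    obtain ⟨m, c, hgc⟩ := hg
    obtain ⟨k, hk⟩ : ∃ k, orderOf t = k + 1 := ⟨orderOf t - 1, by
      have := orderOf_t_pos ht0; omega⟩
    set n := orderOf t with hn
    refine ⟨m * (n - 1), - (t ^ (m * (n - 1)) * c), fun x => ?_⟩
    have hpow : t ^ m * t ^ (m * (n - 1)) = 1 := by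
      rw [← pow_add, show m + m * (n-1) = n * m by
        rw [hk, Nat.add_sub_cancel]; ring]
      rw [pow_mul, pow_orderOf_eq_one, one_pow]
    have : g (t ^ (m * (n - 1)) * x + - (t ^ (m * (n - 1)) * c)) = x := by
      rw [hgc]
      have : t ^ m * (t ^ (m * (n - 1)) * x + -(t ^ (m * (n - 1)) * c)) + c
          = (t ^ m * t ^ (m * (n - 1))) * x - (t ^ m * t ^ (m * (n - 1))) * c + c := by ring
      rw [this, hpow]; ring
    calc g⁻¹ x = g⁻¹ (g (t ^ (m * (n - 1)) * x + - (t ^ (m * (n - 1)) * c))) := by rw [this]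
    _ = _ := by simp

end Inn

section Orbit

variable [Fact p.Prime] {t : ZMod p}

lemma orbit_iff (ht0 : t ≠ 0) (ht1 : t ≠ 1)
    (Inn : Subgroup (Equiv.Perm (ZMod p))) (hInn : Inn = Subgroup.closure (genSet t))
    (a b x y : ZMod p) :
    (x, y) ∈ MulAction.orbit Inn (a, b) ↔ ∃ m : ℕ, t ^ m * (b - a) = y - x := by
  constructor
  · rintro ⟨g, hg⟩
    have hmem : (g : Equiv.Perm (ZMod p)) ∈ Subgroup.closure (genSet t) := by
      rw [← hInn]; exact g.2
    obtain ⟨m, c, hmc⟩ := affine_of_mem ht0 _ hmem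
    have h1 : (g : Equiv.Perm (ZMod p)) a = x := congrArg Prod.fst hg
    have h2 : (g : Equiv.Perm (ZMod p)) b = y := congrArg Prod.snd hg
    rw [hmc] at h1 h2
    exact ⟨m, by linear_combination h2 - h1⟩
  · rintro ⟨m, hm⟩
    refine MulAction.mem_orbit_iff.mpr
      ⟨⟨aff (t ^ m) (pow_ne_zero m ht0) (x - t ^ m * a), by
        rw [hInn]; exact aff_pow_mem ht0 ht1 m _⟩, ?_⟩
    show (aff (t ^ m) (pow_ne_zero m ht0) (x - t ^ m * a) a,
      aff (t ^ m) (pow_ne_zero m ht0) (x - t ^ m * a) b) = (x, y)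
    rw [Prod.mk.injEq, aff_apply, aff_apply]
    exact ⟨by ring, by linear_combination hm⟩

end Orbit

section NumTheory

variable [Fact p.Prime] {t : ZMod p} {n : ℕ}

lemma neg_one_ne_one (h2 : 2 < p) : (-1 : ZMod p) ≠ 1 := by
  intro h
  have h20 : ((2 : ℕ) : ZMod p) = 0 := by push_cast; linear_combination -h
  have := (ZMod.natCast_eq_zero_iff 2 p).mp h20
  have := Nat.le_of_dvd (by norm_num) this
  omega

lemma pow_half_eq_neg_one (ht0 : t ≠ 0) (horder : orderOf t = n) (hev : Even n) :
    t ^ (n / 2) = -1 := by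
  have hn0 : n ≠ 0 := horder ▸ (orderOf_t_pos ht0).ne'
  have hsq : (t ^ (n / 2)) ^ 2 = 1 := by
    rw [← pow_mul, Nat.div_mul_cancel hev.two_dvd, ← horder, pow_orderOf_eq_one]
  have hk : n / 2 * 2 = n := Nat.div_mul_cancel hev.two_dvd
  have hne : t ^ (n / 2) ≠ 1 := by
    intro h
    have hd := orderOf_dvd_of_pow_eq_one h
    rw [horder] at hd
    have := Nat.le_of_dvd (by omega) hd
    omega
  have : (t ^ (n / 2) - 1) * (t ^ (n / 2) + 1) = 0 := by linear_combination hsq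
  rcases mul_eq_zero.mp this with h | h
  · exact absurd (by linear_combination h) hne
  · linear_combination h

end NumTheory

section Count

variable [Fact p.Prime] {t : ZMod p}

def Srel (t : ZMod p) : ZMod p → ZMod p → Prop :=
  fun x y => ∃ m : ℕ, t ^ m * x = y ∨ t ^ m * x = -y

lemma mem_H_iff (ht0 : t ≠ 0) (h : (ZMod p)ˣ) :
    h ∈ Subgroup.zpowers (Units.mk0 t ht0) ⊔ Subgroup.zpowers (-1) ↔
      ∃ m : ℕ, h = (Units.mk0 t ht0) ^ m ∨ h = -(Units.mk0 t ht0) ^ m := by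
  set u := Units.mk0 t ht0 with hu
  constructor
  · intro hmem
    obtain ⟨y, hy, z, hz, hyz⟩ := Subgroup.mem_sup.mp hmem
    obtain ⟨m, (hm : u ^ m = y)⟩ := mem_powers_iff_mem_zpowers.mpr hy
    obtain ⟨k, (hk : (-1) ^ k = z)⟩ := mem_powers_iff_mem_zpowers.mpr hz
    refine ⟨m, ?_⟩
    rcases Nat.even_or_odd k with hev | hod
    · left; rw [← hyz, ← hm, ← hk, hev.neg_one_pow, mul_one]
    · right; rw [← hyz, ← hm, ← hk, hod.neg_one_pow, mul_neg_one]
  · rintro ⟨m, rfl | rfl⟩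
    · exact Subgroup.mem_sup_left (pow_mem (Subgroup.mem_zpowers u) m)
    · rw [show -u ^ m = u ^ m * (-1) by rw [mul_neg_one]]
      exact mul_mem (Subgroup.mem_sup_left (pow_mem (Subgroup.mem_zpowers u) m))
        (Subgroup.mem_sup_right (Subgroup.mem_zpowers _))

noncomputable def quotSEquiv (ht0 : t ≠ 0) :
    Quot (Srel t) ≃
      Option ((ZMod p)ˣ ⧸ (Subgroup.zpowers (Units.mk0 t ht0) ⊔ Subgroup.zpowers (-1))) where
  toFun := Quot.lift
    (fun x => if h : x = 0 then none else some (QuotientGroup.mk (Units.mk0 x h)))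
    (by
      rintro x y ⟨m, hm⟩
      by_cases hx : x = 0
      · have hy : y = 0 := by
          subst hx
          rcases hm with h | h
          · rw [mul_zero] at h; exact h.symm
          · rw [mul_zero] at h; exact (neg_eq_zero.mp h.symm)
        simp [hx, hy]
      · have hne : t ^ m * x ≠ 0 := mul_ne_zero (pow_ne_zero _ ht0) hx
        have hy : y ≠ 0 := by
          rcases hm with h | h
          · exact h ▸ hne
          · exact neg_ne_zero.mp (h ▸ hne)
        simp only [dif_neg hx, dif_neg hy]
        apply congrArg
        rw [QuotientGroup.eq]
        refine (mem_H_iff ht0 _).mpr ⟨m, ?_⟩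
        rcases hm with h | h
        · left
          apply Units.ext
          simp only [Units.val_mul, Units.val_inv_eq_inv_val, Units.val_mk0,
            Units.val_pow_eq_pow_val]
          rw [← h]
          field_simp
        · right
          apply Units.ext
          simp only [Units.val_mul, Units.val_inv_eq_inv_val, Units.val_mk0,
            Units.val_pow_eq_pow_val, Units.val_neg]
          have hy' : y = -(t ^ m * x) := by rw [h]; ring_nf
          rw [hy']
          field_simp)
  invFun := fun o => Option.elim o (Quot.mk (Srel t) 0)
    (Quotient.lift (fun v : (ZMod p)ˣ => Quot.mk (Srel t) (v : ZMod p))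
      (by
        intro v w hvw
        have hmem := QuotientGroup.leftRel_apply.mp hvw
        obtain ⟨m, hm⟩ := (mem_H_iff ht0 _).mp hmem
        apply Quot.sound
        refine ⟨m, ?_⟩
        rcases hm with h | h
        · left
          have hw : w = v * (Units.mk0 t ht0) ^ m := by
            rw [← h]; group
          rw [hw]
          push_cast [Units.val_mul, Units.val_pow_eq_pow_val, Units.val_mk0]
          ring
        · right
          have hw : w = v * (-(Units.mk0 t ht0) ^ m) := by
            rw [← h]; group
          rw [hw]
          push_cast [Units.val_mul, Units.val_neg, Units.val_pow_eq_pow_val, Units.val_mk0]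
          ring))
  left_inv := by
    apply Quot.ind
    intro x
    by_cases hx : x = 0
    · subst hx; simp
    · simp only [dif_neg hx]
      rfl
  right_inv := by
    rintro (_ | q)
    · simp
    · induction q using Quotient.ind with
      | _ v =>
        show (if h : (v : ZMod p) = 0 then none else some (QuotientGroup.mk (Units.mk0 _ h)))
          = some (QuotientGroup.mk v)
        rw [dif_neg (Units.ne_zero v)]
        congr 1
        apply congrArg
        exact Units.ext rfl

end Count

/-- Let `p` be prime, `(A_p, f)` affine connected of order `p` with `n` the
order of `t` mod `p`, `Inn(A_p)` the group of permutations generated by the right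
translations, acting diagonally on pairs. If `n` is even then `-1 ∈ ⟨t⟩`, every diagonal
orbit is invariant under the swap `τ(x,y) = (y,x)`, and `|A_p ⊗ A_p / ⟨τ⟩| = 1 + (p-1)/n`.
If `n` is odd then for `k ≠ 0` the orbits of `(0,k)` and `(k,0)` are distinct, and
`|A_p ⊗ A_p / ⟨τ⟩| = 1 + (p-1)/(2n)`. Here `A_p ⊗ A_p / ⟨τ⟩` is the quotient of
`A_p × A_p` by the relation generated by the orbit relation together with the swap. -/
theorem stmt17 (p n : ℕ) (hp : p.Prime) (t : ZMod p) (ht0 : t ≠ 0) (ht1 : t ≠ 1)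
    (horder : orderOf t = n)
    (Inn : Subgroup (Equiv.Perm (ZMod p)))
    (hInn : Inn = Subgroup.closure
      {σ : Equiv.Perm (ZMod p) | ∃ j : ZMod p, ∀ x, σ x = t * x + (1 - t) * j})
    (rel : (ZMod p × ZMod p) → (ZMod p × ZMod p) → Prop)
    (hrel : ∀ q q', rel q q' ↔ ((∃ g : Inn, g • q = q') ∨ (∃ g : Inn, g • q = Prod.swap q'))) :
    (Even n →
      ((-1 : ZMod p) ∈ Submonoid.powers t) ∧
      (∀ q : ZMod p × ZMod p,
        Prod.swap '' (MulAction.orbit Inn q) = MulAction.orbit Inn q) ∧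
      Nat.card (Quot rel) = 1 + (p - 1) / n) ∧
    (Odd n →
      (∀ k : ZMod p, k ≠ 0 →
        MulAction.orbit Inn ((0 : ZMod p), k) ≠ MulAction.orbit Inn (k, (0 : ZMod p))) ∧
      Nat.card (Quot rel) = 1 + (p - 1) / (2 * n)) := by
  haveI := Fact.mk hp
  have h2p : 2 < p := aux_two_lt hp t ht0 ht1
  have hInn' : Inn = Subgroup.closure (genSet t) := hInn
  have hnpos : 0 < n := horder ▸ orderOf_t_pos ht0
  have hne1 : (-1 : ZMod p) ≠ 1 := neg_one_ne_one h2p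
  -- translate rel to the difference relation
  have hrelS : ∀ q q' : ZMod p × ZMod p, rel q q' ↔ Srel t (q.2 - q.1) (q'.2 - q'.1) := by
    rintro ⟨a, b⟩ ⟨c, d⟩
    rw [hrel]
    have h1 : (∃ g : Inn, g • ((a, b) : ZMod p × ZMod p) = (c, d)) ↔
        ∃ m : ℕ, t ^ m * (b - a) = d - c := by
      rw [← MulAction.mem_orbit_iff, orbit_iff ht0 ht1 Inn hInn']
    have h2 : (∃ g : Inn, g • ((a, b) : ZMod p × ZMod p) = Prod.swap (c, d)) ↔
        ∃ m : ℕ, t ^ m * (b - a) = c - d := by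
      rw [show Prod.swap ((c, d) : ZMod p × ZMod p) = (d, c) from rfl,
        ← MulAction.mem_orbit_iff, orbit_iff ht0 ht1 Inn hInn']
    rw [h1, h2]
    constructor
    · rintro (⟨m, hm⟩ | ⟨m, hm⟩)
      · exact ⟨m, Or.inl hm⟩
      · exact ⟨m, Or.inr (by rw [hm]; ring)⟩
    · rintro ⟨m, hm | hm⟩
      · exact Or.inl ⟨m, hm⟩
      · exact Or.inr ⟨m, by rw [hm]; ring⟩
  have e1 : Quot rel ≃ Quot (Srel t) :=
    { toFun := Quot.lift (fun q => Quot.mk _ (q.2 - q.1))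
        (fun a b h => Quot.sound ((hrelS a b).mp h))
      invFun := Quot.lift (fun x => Quot.mk rel ((0 : ZMod p), x))
        (fun a b h => Quot.sound ((hrelS (0, a) (0, b)).mpr (by simpa using h)))
      left_inv := by
        apply Quot.ind
        intro q
        exact Quot.sound ((hrelS (0, q.2 - q.1) q).mpr ⟨0, Or.inl (by ring)⟩)
      right_inv := by
        apply Quot.ind
        intro x
        show Quot.mk _ (x - 0) = Quot.mk _ x
        rw [sub_zero] }
  have hcard1 : Nat.card (Quot rel) = Nat.card (Quot (Srel t)) := Nat.card_congr e1
  set u : (ZMod p)ˣ := Units.mk0 t ht0 with hu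
  set H : Subgroup (ZMod p)ˣ := Subgroup.zpowers u ⊔ Subgroup.zpowers (-1) with hH
  have e2 : Quot (Srel t) ≃ Option ((ZMod p)ˣ ⧸ H) := quotSEquiv ht0
  have hcard2 : Nat.card (Quot (Srel t)) = Nat.card ((ZMod p)ˣ ⧸ H) + 1 := by
    have e3 : Option ((ZMod p)ˣ ⧸ H) ≃ ((ZMod p)ˣ ⧸ H) ⊕ PUnit.{1} :=
      Equiv.optionEquivSumPUnit _
    rw [Nat.card_congr e2, Nat.card_congr e3, Nat.card_sum]
    simp
  have hHcard : Nat.card ((ZMod p)ˣ) = Nat.card ((ZMod p)ˣ ⧸ H) * Nat.card H :=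
    Subgroup.card_eq_card_quotient_mul_card_subgroup H
  have hunits : Nat.card ((ZMod p)ˣ) = p - 1 := by
    rw [Nat.card_eq_fintype_card, ZMod.card_units]
  have hordu : orderOf u = n := by rw [← orderOf_units]; exact horder
  have hun : u ^ n = 1 := by rw [← hordu]; exact pow_orderOf_eq_one u
  constructor
  · -- even case
    intro hev
    have hneg : t ^ (n / 2) = -1 := pow_half_eq_neg_one ht0 horder hev
    refine ⟨⟨n / 2, hneg⟩, ?_, ?_⟩
    · rintro ⟨a, b⟩
      ext ⟨x, y⟩
      simp only [Set.mem_image]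
      constructor
      · rintro ⟨⟨x', y'⟩, hmem, hsw⟩
        rw [← hsw]
        obtain ⟨m, hm⟩ := (orbit_iff ht0 ht1 Inn hInn' a b x' y').mp hmem
        show ((y', x') : ZMod p × ZMod p) ∈ _
        exact (orbit_iff ht0 ht1 Inn hInn' a b y' x').mpr
          ⟨m + n / 2, by rw [pow_add, hneg]; linear_combination -hm⟩
      · intro hmem
        refine ⟨(y, x), ?_, rfl⟩
        obtain ⟨m, hm⟩ := (orbit_iff ht0 ht1 Inn hInn' a b x y).mp hmem
        exact (orbit_iff ht0 ht1 Inn hInn' a b y x).mpr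
          ⟨m + n / 2, by rw [pow_add, hneg]; linear_combination -hm⟩
    · have hHz : H = Subgroup.zpowers u := by
        apply le_antisymm
        · apply sup_le le_rfl
          rw [Subgroup.zpowers_le]
          refine mem_powers_iff_mem_zpowers.mp ⟨n / 2, ?_⟩
          apply Units.ext
          simp only [Units.val_pow_eq_pow_val, Units.val_neg, Units.val_one]
          exact hneg
        · exact le_sup_left
      have hcH : Nat.card H = n := by rw [hHz, Nat.card_zpowers]; exact hordu
      have hq : Nat.card ((ZMod p)ˣ ⧸ H) = (p - 1) / n := by
        rw [← hunits, hHcard, hcH, Nat.mul_div_cancel _ hnpos]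
      rw [hcard1, hcard2, hq]
      omega
  · -- odd case
    intro hod
    constructor
    · intro k hk heq
      obtain ⟨m, hm⟩ := (orbit_iff ht0 ht1 Inn hInn' k 0 0 k).mp
        (MulAction.orbit_eq_iff.mp heq)
      have htm : t ^ m = -1 := by
        have h' : t ^ m * k = -1 * k := by linear_combination -hm
        exact mul_right_cancel₀ hk h'
      have h2m : t ^ (2 * m) = 1 := by rw [two_mul, pow_add, htm]; ring
      have hdvd : n ∣ 2 * m := horder ▸ orderOf_dvd_of_pow_eq_one h2m
      have hdvd' : n ∣ m :=
        (Nat.Coprime.dvd_of_dvd_mul_left (Nat.coprime_two_right.mpr hod) hdvd)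
      have hone : t ^ m = 1 := by
        obtain ⟨c, rfl⟩ := hdvd'
        rw [pow_mul, ← horder, pow_orderOf_eq_one, one_pow]
      rw [hone] at htm
      exact hne1 htm.symm
    · have hmemH : -u ∈ H := by
        rw [show -u = u * (-1) from (mul_neg_one u).symm]
        exact mul_mem (Subgroup.mem_sup_left (Subgroup.mem_zpowers u))
          (Subgroup.mem_sup_right (Subgroup.mem_zpowers _))
      have hHz : H = Subgroup.zpowers (-u) := by
        apply le_antisymm
        · apply sup_le
          · rw [Subgroup.zpowers_le]
            refine mem_powers_iff_mem_zpowers.mp ⟨n + 1, ?_⟩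
            show (-u) ^ (n + 1) = u
            rw [neg_pow, (hod.add_one).neg_one_pow, one_mul, pow_succ, hun, one_mul]
          · rw [Subgroup.zpowers_le]
            refine mem_powers_iff_mem_zpowers.mp ⟨n, ?_⟩
            show (-u) ^ n = -1
            rw [neg_pow, hod.neg_one_pow, hun, mul_one]
        · rw [Subgroup.zpowers_le]; exact hmemH
      have ho2 : orderOf (-1 : (ZMod p)ˣ) = 2 := by
        refine orderOf_eq_prime neg_one_sq ?_
        intro h
        exact hne1 (by simpa [Units.ext_iff] using h)
      have hcH : Nat.card H = 2 * n := by
        rw [hHz, Nat.card_zpowers, show -u = -1 * u from (neg_one_mul u).symm,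
          (Commute.all (-1 : (ZMod p)ˣ) u).orderOf_mul_eq_mul_orderOf_of_coprime
            (by rw [ho2, hordu]; exact Nat.coprime_two_left.mpr hod),
          ho2, hordu]
      have hq : Nat.card ((ZMod p)ˣ ⧸ H) = (p - 1) / (2 * n) := by
        rw [← hunits, hHcard, hcH, Nat.mul_div_cancel _ (by omega)]
      rw [hcard1, hcard2, hq]
      omega
end

section
/- Let X be a finite quandle and suppose the action of Inn(X) on X is transitive. If every orbit of the diagonal Inn(X)-action on X × X is invariant under the coordinate swap τ(x,y) = (y,x), then the permutation representation of Inn(X) on C[X] is multiplicity free (i.e., the quandle ring C[X] decomposes as a direct sum of pairwise non-isomorphic simple right ideals). -/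
/-!
Gelfand's trick: if `g ∈ Inn(X)` exchanges `x` and `y`, every equivariant endomorphism `T` of
`ℂ[X]` satisfies `T δₓ (y) = T δ_y (x)`, so its matrix is symmetric. Products of equivariant
endomorphisms are equivariant, hence symmetric too, and therefore equivariant endomorphisms
commute. If `e` maps `U` equivariantly onto `V` and `P` is an equivariant projection onto `U`
(Maschke), then `e ∘ P` is equivariant and commutes with `P`, so `V = e(U) = P(e(P(U))) ≤ U`,
and irreducibility of `U` forces `V = U`.
-/

namespace Matrix

theorem IsSymm.commute_of_isSymm_mul {n α : Type*} [Fintype n] [CommSemiring α]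
    {A B : Matrix n n α} (hA : A.IsSymm) (hB : B.IsSymm) (hAB : (A * B).IsSymm) :
    Commute A B := by
  rw [Commute, SemiconjBy, ← hAB.eq, transpose_mul, hA.eq, hB.eq]

end Matrix

namespace Representation

variable {k G V : Type*}

section funLeft

variable (k G) (X : Type*) [CommSemiring k] [Group G] [MulAction G X]

def funLeft : Representation k G (X → k) where
  toFun g := LinearMap.funLeft k k (g⁻¹ • ·)
  map_one' := by ext; simp
  map_mul' g h := by ext; simp [mul_smul]

variable {k G X}

@[simp]
theorem funLeft_apply (g : G) (f : X → k) (x : X) : funLeft k G X g f x = f (g⁻¹ • x) := rfl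

theorem funLeft_single [DecidableEq X] (g : G) (x : X) (c : k) :
    funLeft k G X g (Pi.single x c) = Pi.single (g • x) c := by
  ext y
  simp only [funLeft_apply, Pi.single_apply, inv_smul_eq_iff]

end funLeft

section Gelfand

variable {X : Type*} [Fintype X] [DecidableEq X] [CommRing k] [Group G] [MulAction G X]

theorem isSymm_toMatrix'_of_commute_funLeft
    (hswap : ∀ x y : X, ∃ g : G, g • x = y ∧ g • y = x) {T : Module.End k (X → k)}
    (hT : ∀ g, Commute T (funLeft k G X g)) : (LinearMap.toMatrix' T).IsSymm := by
  refine Matrix.IsSymm.ext fun x y => ?_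
  obtain ⟨g, hgx, hgy⟩ := hswap x y
  have hgy' : g⁻¹ • x = y := by rw [← hgy, inv_smul_smul]
  calc LinearMap.toMatrix' T y x = T (Pi.single x 1) y := LinearMap.toMatrix'_apply T y x
    _ = funLeft k G X g (T (Pi.single x 1)) x := by rw [funLeft_apply, hgy']
    _ = T (funLeft k G X g (Pi.single x 1)) x := by
        rw [← Module.End.mul_apply, ← (hT g).eq]; rfl
    _ = LinearMap.toMatrix' T x y := by rw [funLeft_single, hgx, LinearMap.toMatrix'_apply]

theorem commute_of_commute_funLeft
    (hswap : ∀ x y : X, ∃ g : G, g • x = y ∧ g • y = x) {S T : Module.End k (X → k)}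
    (hS : ∀ g, Commute S (funLeft k G X g)) (hT : ∀ g, Commute T (funLeft k G X g)) :
    Commute S T := by
  have hST : ∀ g, Commute (S * T) (funLeft k G X g) := fun g => (hS g).mul_left (hT g)
  have := (isSymm_toMatrix'_of_commute_funLeft hswap hS).commute_of_isSymm_mul
    (isSymm_toMatrix'_of_commute_funLeft hswap hT)
    (LinearMap.toMatrix'_mul S T ▸ isSymm_toMatrix'_of_commute_funLeft hswap hST)
  rwa [Commute, SemiconjBy, ← LinearMap.toMatrix'_mul, ← LinearMap.toMatrix'_mul,
    EmbeddingLike.apply_eq_iff_eq] at this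

end Gelfand

section Maschke

variable [Field k] [Group G] [Finite G] [NeZero (Nat.card G : k)] [AddCommGroup V] [Module k V]
  (ρ : Representation k G V)

theorem exists_isCompl_of_le_comap {U : Submodule k V} (hU : ∀ g, U ≤ U.comap (ρ g)) :
    ∃ W : Submodule k V, IsCompl U W ∧ ∀ g, W ≤ W.comap (ρ g) := by
  obtain ⟨W, hUW⟩ := exists_isCompl (⟨U, hU⟩ : Subrepresentation ρ)
  exact ⟨W.toSubmodule,
    ⟨disjoint_iff.2 (congrArg Subrepresentation.toSubmodule hUW.inf_eq_bot),
      codisjoint_iff.2 (congrArg Subrepresentation.toSubmodule hUW.sup_eq_top)⟩,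
    W.apply_mem_toSubmodule⟩

theorem exists_isIdempotentElem_range_eq_commute {U : Submodule k V}
    (hU : ∀ g, U ≤ U.comap (ρ g)) :
    ∃ P : Module.End k V,
      IsIdempotentElem P ∧ LinearMap.range P = U ∧ ∀ g, Commute P (ρ g) := by
  obtain ⟨W, hUW, hW⟩ := exists_isCompl_of_le_comap ρ hU
  have hP := Submodule.isIdempotentElem_projection hUW
  refine ⟨U.projection W hUW, hP, Submodule.range_projection hUW, fun g => ?_⟩
  rw [LinearMap.IsIdempotentElem.commute_iff hP, Submodule.range_projection,
    Submodule.ker_projection, Module.End.mem_invtSubmodule, Module.End.mem_invtSubmodule]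
  exact ⟨hU g, hW g⟩

theorem map_le_of_commute
    (hcomm : ∀ S T : Module.End k V, (∀ g, Commute S (ρ g)) → (∀ g, Commute T (ρ g)) →
      Commute S T)
    {U : Submodule k V} (hU : ∀ g, U ≤ U.comap (ρ g)) {e : Module.End k V}
    (he : ∀ g, ∀ u ∈ U, e (ρ g u) = ρ g (e u)) : U.map e ≤ U := by
  obtain ⟨P, hPP, hPU, hPρ⟩ := exists_isIdempotentElem_range_eq_commute ρ hU
  have hPmem : ∀ v, P v ∈ U := fun v => hPU ▸ LinearMap.mem_range_self P v
  have heP : ∀ g, Commute (e * P) (ρ g) := fun g => LinearMap.ext fun v => by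
    simp only [Module.End.mul_apply, ← he g _ (hPmem v), ← Module.End.mul_apply P, (hPρ g).eq]
  have hfix : ∀ u ∈ U, P u = u := by
    rw [← hPU]
    rintro _ ⟨v, rfl⟩
    exact congrArg (· v) hPP.eq
  rintro _ ⟨u, hu, rfl⟩
  have hcomm' : Commute (e * P) P := hcomm _ _ heP hPρ
  have : e u = P ((e * P) u) :=
    calc e u = (e * P) (P u) := by rw [Module.End.mul_apply, hfix u hu, hfix u hu]
      _ = P ((e * P) u) := by rw [← Module.End.mul_apply, hcomm'.eq]; rfl
  exact this ▸ hPmem _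

end Maschke

end Representation

theorem stmt19_general (X : Type*) [Fintype X]
    (R : X → Equiv.Perm X)
    (hswap : ∀ x y : X, ∃ g ∈ Subgroup.closure (Set.range R), g x = y ∧ g y = x) :
    ∀ U V : Submodule ℂ (X → ℂ),
      (∀ g ∈ Subgroup.closure (Set.range R), ∀ f ∈ U, (f ∘ g.symm) ∈ U) →
      (∀ g ∈ Subgroup.closure (Set.range R), ∀ f ∈ V, (f ∘ g.symm) ∈ V) →
      U ≠ ⊥ →
      (∀ U' : Submodule ℂ (X → ℂ), U' ≤ U →
        (∀ g ∈ Subgroup.closure (Set.range R), ∀ f ∈ U', (f ∘ g.symm) ∈ U') →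
        U' = ⊥ ∨ U' = U) →
      V ≠ ⊥ →
      (∀ V' : Submodule ℂ (X → ℂ), V' ≤ V →
        (∀ g ∈ Subgroup.closure (Set.range R), ∀ f ∈ V', (f ∘ g.symm) ∈ V') →
        V' = ⊥ ∨ V' = V) →
      U ≠ V →
      ¬ ∃ e : (X → ℂ) →ₗ[ℂ] (X → ℂ),
          Submodule.map e U = V ∧ Set.InjOn e U ∧
          ∀ g ∈ Subgroup.closure (Set.range R), ∀ f ∈ U, e (f ∘ g.symm) = (e f) ∘ g.symm := by
  classical
  rintro U V hUinv hVinv - hUirr hVne - hUV ⟨e, hmap, -, he⟩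
  let G := Subgroup.closure (Set.range R)
  have hswapG : ∀ x y : X, ∃ g : G, g • x = y ∧ g • y = x := fun x y =>
    let ⟨g, hg, hgxy⟩ := hswap x y
    ⟨⟨g, hg⟩, hgxy⟩
  have hVU : V ≤ U := hmap ▸ Representation.map_le_of_commute (Representation.funLeft ℂ G X)
    (fun _ _ => Representation.commute_of_commute_funLeft hswapG)
    (fun g f hf => hUinv g g.2 f hf) (fun g f hf => he g g.2 f hf)
  rcases hUirr V hVU hVinv with hV | hV
  · exact hVne hV
  · exact hUV hV.symm

/-- Let `X` be a finite quandle (idempotent, right-distributive, with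
bijective right translations `R y : x ↦ x ▷ y`) whose inner automorphism group
`Inn(X) = ⟨R y : y ∈ X⟩` acts transitively on `X`. If every orbit of the diagonal
`Inn(X)`-action on `X × X` is invariant under the coordinate swap (i.e. for all `x, y`
there is `g ∈ Inn(X)` with `g x = y` and `g y = x`), then the permutation representation
of `Inn(X)` on `C[X] = (X → ℂ)` is multiplicity free: any two distinct invariant
irreducible subspaces are non-isomorphic as representations. -/
theorem stmt19 (X : Type*) [Fintype X] (op : X → X → X)
    (hidem : ∀ x, op x x = x)
    (hdistrib : ∀ x y z, op (op x y) z = op (op x z) (op y z))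
    (R : X → Equiv.Perm X) (hR : ∀ x y, R y x = op x y)
    (htrans : ∀ x y : X, ∃ g ∈ Subgroup.closure (Set.range R), g x = y)
    (hswap : ∀ x y : X, ∃ g ∈ Subgroup.closure (Set.range R), g x = y ∧ g y = x) :
    ∀ U V : Submodule ℂ (X → ℂ),
      (∀ g ∈ Subgroup.closure (Set.range R), ∀ f ∈ U, (f ∘ g.symm) ∈ U) →
      (∀ g ∈ Subgroup.closure (Set.range R), ∀ f ∈ V, (f ∘ g.symm) ∈ V) →
      U ≠ ⊥ →
      (∀ U' : Submodule ℂ (X → ℂ), U' ≤ U →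
        (∀ g ∈ Subgroup.closure (Set.range R), ∀ f ∈ U', (f ∘ g.symm) ∈ U') →
        U' = ⊥ ∨ U' = U) →
      V ≠ ⊥ →
      (∀ V' : Submodule ℂ (X → ℂ), V' ≤ V →
        (∀ g ∈ Subgroup.closure (Set.range R), ∀ f ∈ V', (f ∘ g.symm) ∈ V') →
        V' = ⊥ ∨ V' = V) →
      U ≠ V →
      ¬ ∃ e : (X → ℂ) →ₗ[ℂ] (X → ℂ),
          Submodule.map e U = V ∧ Set.InjOn e U ∧
          ∀ g ∈ Subgroup.closure (Set.range R), ∀ f ∈ U, e (f ∘ g.symm) = (e f) ∘ g.symm :=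
  stmt19_general X R hswap
end
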